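/- Under the standing assumption, a point p ∈ ℝ^𝓖_{≥0} with σ := Σ_{g ∈ 𝓖} p(g) > 0 is an equilibrium of the recombination dynamics (i.e., F(p) = 0) if and only if p(g) = σ^{1−L} ∏_{i ∈ 𝓛} pᵢ(gᵢ) for all g ∈ 𝓖. -/

import Mathlib

open Finset

/-- Recombination of gametes `g` and `h` following pattern `{I, Iᶜ}`:
`(g_I h_J)ᵢ = gᵢ` for `i ∈ I` and `= hᵢ` for `i ∈ J = Iᶜ`. -/
def recomb {L : Type} [DecidableEq L] {A : L → Type} (I : Finset L)
    (g h : ∀ i, A i) : ∀ i, A i :=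
  fun i => if i ∈ I then g i else h i

/-- The recombination vector field
`F(p) = (1/2) Σ_{g,h} Σ_{{I,J} ∈ 𝓟} c({I,J}) p(g) p(h) (g_I h_J + g_J h_I − g − h)`,
where the sum over unordered patterns `{I,J}` is written as `(1/2) Σ_{I : Finset L}`
(every unordered pattern `{I, Iᶜ}` corresponds to exactly two subsets `I` and `Iᶜ`;
the rate constants satisfy `c I = c Iᶜ`). -/
noncomputable def recF {L : Type} [Fintype L] [DecidableEq L] {A : L → Type}
    [∀ i, Fintype (A i)] [∀ i, DecidableEq (A i)]
    (c : Finset L → ℝ) (p : (∀ i, A i) → ℝ) : (∀ i, A i) → ℝ :=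
  fun x => (1 / 4) * ∑ g : ∀ i, A i, ∑ h : ∀ i, A i, ∑ I : Finset L,
    c I * p g * p h *
      ((if x = recomb I g h then 1 else 0) + (if x = recomb Iᶜ g h then 1 else 0)
        - (if x = g then 1 else 0) - (if x = h then 1 else 0))

/-- The marginal frequency `pᵢ(a) = Σ_{g : gᵢ = a} p(g)`. -/
noncomputable def marg {L : Type} [Fintype L] [DecidableEq L] {A : L → Type}
    [∀ i, Fintype (A i)] [∀ i, DecidableEq (A i)]
    (p : (∀ i, A i) → ℝ) (i : L) (a : A i) : ℝ :=
  ∑ g : ∀ j, A j, if g i = a then p g else 0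

/-!
Normalise `p` to a probability vector `q`. Then `F(q) = 0` says that `q` is the mixture, with
weights `c I / ∑ c`, of the products `q_I ⊗ q_{Iᶜ}` of its marginals on the two blocks of each
pattern. Each such product has at least the entropy of `q` (Gibbs' inequality, since it has the
same block marginals as `q`), while by concavity the entropy of the mixture is at least the mean
entropy of its components. Hence all these inequalities are equalities, and strict concavity forces
`q = q_I ⊗ q_{Iᶜ}` whenever `c I > 0`. The patterns across which `q` factorises are closed under
intersection, so the separation assumption gives factorisation across every `{{i}, {i}ᶜ}`, i.e. `q`
is the product of its one-locus marginals. Conversely, a product measure factorises across every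
pattern, which makes every term of `F(q)` vanish.
-/

section

variable {L : Type} [Fintype L] [DecidableEq L] {A : L → Type}

theorem eq_recomb_iff {I : Finset L} {x g h : ∀ i, A i} :
    x = recomb I g h ↔ (∀ i ∈ I, g i = x i) ∧ ∀ i ∈ Iᶜ, h i = x i := by
  simp only [funext_iff, recomb, mem_compl]
  constructor
  · rintro hx
    exact ⟨fun i hi => by simp [hx i, hi], fun i hi => by simp [hx i, hi]⟩
  · rintro ⟨hI, hJ⟩ i
    split_ifs with hi
    exacts [(hI i hi).symm, (hJ i hi).symm]

variable [∀ i, Fintype (A i)] [∀ i, DecidableEq (A i)]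

noncomputable def margOn (p : (∀ i, A i) → ℝ) (S : Finset L) (x : ∀ i, A i) : ℝ :=
  ∑ g : ∀ i, A i, if ∀ i ∈ S, g i = x i then p g else 0

theorem margOn_mul_margOn_compl (p : (∀ i, A i) → ℝ) (S : Finset L) (x : ∀ i, A i) :
    margOn p S x * margOn p Sᶜ x =
      ∑ g : ∀ i, A i, ∑ h : ∀ i, A i, if x = recomb S g h then p g * p h else 0 := by
  simp only [margOn, sum_mul_sum, ite_zero_mul_ite_zero, eq_recomb_iff]

theorem sum_margOn_mul_margOn_compl_mul (p : (∀ i, A i) → ℝ) (S : Finset L)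
    (u : (∀ i, A i) → ℝ) :
    ∑ x : ∀ i, A i, margOn p S x * margOn p Sᶜ x * u x =
      ∑ g : ∀ i, A i, ∑ h : ∀ i, A i, p g * p h * u (recomb S g h) := by
  simp only [margOn_mul_margOn_compl, sum_mul, ite_mul, zero_mul]
  rw [sum_comm]
  refine sum_congr rfl fun g _ => ?_
  rw [sum_comm]
  simp

theorem recF_apply (c : Finset L → ℝ) (p : (∀ i, A i) → ℝ) (x : ∀ i, A i) :
    recF c p x = (1 / 2) * ∑ I : Finset L,
      c I * (margOn p I x * margOn p Iᶜ x - (∑ g : ∀ i, A i, p g) * p x) := by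
  have recombined (k : ℝ) (J : Finset L) : ∑ g : ∀ i, A i, ∑ h : ∀ i, A i,
      k * p g * p h * (if x = recomb J g h then 1 else 0) =
        k * (margOn p J x * margOn p Jᶜ x) := by
    simp only [margOn_mul_margOn_compl, mul_sum, mul_ite, mul_one, mul_zero, mul_assoc]
  have left_parent (k : ℝ) : ∑ g : ∀ i, A i, ∑ h : ∀ i, A i,
      k * p g * p h * (if x = g then 1 else 0) = k * ((∑ g : ∀ i, A i, p g) * p x) := by
    simp only [mul_ite, mul_one, mul_zero, sum_ite_irrel, ← mul_sum, sum_const_zero, sum_ite_eq,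
      mem_univ, if_true]
    ring
  have right_parent (k : ℝ) : ∑ g : ∀ i, A i, ∑ h : ∀ i, A i,
      k * p g * p h * (if x = h then 1 else 0) = k * ((∑ g : ∀ i, A i, p g) * p x) := by
    simp [mul_ite, ← sum_mul, ← mul_sum, mul_assoc]
  rw [recF, sum_congr rfl fun g _ => sum_comm, sum_comm, mul_sum, mul_sum]
  refine sum_congr rfl fun I _ => ?_
  simp only [mul_add, mul_sub, sum_add_distrib, sum_sub_distrib, recombined, compl_compl,
    left_parent, right_parent]
  ring

theorem margOn_nonneg {p : (∀ i, A i) → ℝ} (hp : ∀ x, 0 ≤ p x) (S : Finset L) (x : ∀ i, A i) :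
    0 ≤ margOn p S x :=
  sum_nonneg fun g _ => by split_ifs; exacts [hp g, le_rfl]

theorem le_margOn {p : (∀ i, A i) → ℝ} (hp : ∀ x, 0 ≤ p x) (S : Finset L) (x : ∀ i, A i) :
    p x ≤ margOn p S x := by
  simpa [margOn] using single_le_sum (f := fun g => if ∀ i ∈ S, g i = x i then p g else 0)
    (fun g _ => by split_ifs; exacts [hp g, le_rfl]) (mem_univ x)

theorem margOn_univ (p : (∀ i, A i) → ℝ) (x : ∀ i, A i) : margOn p univ x = p x := by
  simp [margOn, ← funext_iff]

theorem margOn_empty (p : (∀ i, A i) → ℝ) (x : ∀ i, A i) :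
    margOn p ∅ x = ∑ g : ∀ i, A i, p g := by
  simp [margOn]

theorem margOn_singleton (p : (∀ i, A i) → ℝ) (i : L) (x : ∀ i, A i) :
    margOn p {i} x = marg p i (x i) := by
  simp [margOn, marg]

theorem margOn_congr (p : (∀ i, A i) → ℝ) {S : Finset L} {x y : ∀ i, A i}
    (h : ∀ i ∈ S, x i = y i) : margOn p S x = margOn p S y :=
  sum_congr rfl fun g _ => if_congr (forall₂_congr fun i hi => by rw [h i hi]) rfl rfl

def FactorsAcross (q : (∀ i, A i) → ℝ) (S : Finset L) : Prop :=
  ∀ x, margOn q S x * margOn q Sᶜ x = q x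

section FactorsAcross

variable {q : (∀ i, A i) → ℝ}

theorem factorsAcross_univ (hq : ∑ g : ∀ i, A i, q g = 1) : FactorsAcross q univ := by
  intro x
  rw [margOn_univ, compl_univ, margOn_empty, hq, mul_one]

theorem FactorsAcross.margOn_eq {S : Finset L} (hS : FactorsAcross q S) (T : Finset L)
    (x : ∀ i, A i) : margOn q T x = margOn q (T ∩ S) x * margOn q (T \ S) x := by
  have agree (g h : ∀ i, A i) : (∀ i ∈ T, recomb S g h i = x i) ↔
      (∀ i ∈ T ∩ S, g i = x i) ∧ ∀ i ∈ T \ S, h i = x i := by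
    simp only [recomb, mem_inter, mem_sdiff]
    constructor
    · intro H
      exact ⟨fun i hi => by simpa [hi.2] using H i hi.1,
        fun i hi => by simpa [hi.2] using H i hi.1⟩
    · intro H i hi
      split_ifs with hiS
      exacts [H.1 i ⟨hi, hiS⟩, H.2 i ⟨hi, hiS⟩]
  calc margOn q T x
      = ∑ y : ∀ i, A i, margOn q S y * margOn q Sᶜ y *
          (if ∀ i ∈ T, y i = x i then 1 else 0) := by
        rw [margOn]
        exact sum_congr rfl fun y _ => by rw [hS y, mul_ite, mul_one, mul_zero]
    _ = ∑ g : ∀ i, A i, ∑ h : ∀ i, A i,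
          if (∀ i ∈ T ∩ S, g i = x i) ∧ ∀ i ∈ T \ S, h i = x i then q g * q h else 0 := by
        rw [sum_margOn_mul_margOn_compl_mul]
        simp only [agree, mul_ite, mul_one, mul_zero]
    _ = margOn q (T ∩ S) x * margOn q (T \ S) x := by
        simp only [margOn, sum_mul_sum, ite_zero_mul_ite_zero]

theorem FactorsAcross.inter {S T : Finset L} (hS : FactorsAcross q S) (hT : FactorsAcross q T) :
    FactorsAcross q (S ∩ T) := by
  intro x
  have hST : (S ∩ T)ᶜ ∩ S = S \ T := by
    ext; simp only [compl_inter, mem_inter, mem_union, mem_compl, mem_sdiff]; tauto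
  have hSc : (S ∩ T)ᶜ \ S = Sᶜ := by
    ext; simp only [compl_inter, mem_sdiff, mem_union, mem_compl]; tauto
  rw [hS.margOn_eq (S ∩ T)ᶜ, hST, hSc, ← mul_assoc, ← hT.margOn_eq S, hS x]

end FactorsAcross

section ProductForm

variable {q : (∀ i, A i) → ℝ}

theorem factorsAcross_singleton (hq : ∑ g : ∀ i, A i, q g = 1) (i : L)
    (hsep : ∀ j ≠ i, ∃ S, FactorsAcross q S ∧ i ∈ S ∧ j ∉ S) : FactorsAcross q {i} := by
  have hsep' (j : L) : ∃ S, FactorsAcross q S ∧ i ∈ S ∧ (j ≠ i → j ∉ S) := by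
    by_cases hj : j = i
    · exact ⟨univ, factorsAcross_univ hq, mem_univ i, fun h => (h hj).elim⟩
    · obtain ⟨S, hS, hiS, hjS⟩ := hsep j hj
      exact ⟨S, hS, hiS, fun _ => hjS⟩
  choose S hS hiS hjS using hsep'
  have hinf : univ.inf S = {i} := by
    ext k
    simp only [mem_inf, mem_univ, true_implies, mem_singleton]
    refine ⟨fun hk => ?_, fun hk j => hk ▸ hiS j⟩
    by_contra hki
    exact hjS k hki (hk k)
  rw [← hinf]
  exact inf_induction (factorsAcross_univ hq) (fun _ h₁ _ h₂ => h₁.inter h₂) fun j _ => hS j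

theorem eq_prod_marg_of_factorsAcross_singleton (hq : ∑ g : ∀ i, A i, q g = 1)
    (h : ∀ i, FactorsAcross q {i}) (x : ∀ i, A i) : q x = ∏ i, marg q i (x i) := by
  have peel (F : Finset L) : q x = (∏ i ∈ F, marg q i (x i)) * margOn q Fᶜ x := by
    induction F using Finset.induction_on with
    | empty => simp [margOn_univ]
    | insert a F ha ih =>
      have hcap : Fᶜ ∩ {a} = {a} := by simpa using ha
      have hdiff : Fᶜ \ {a} = (insert a F)ᶜ := by
        ext; simp only [mem_sdiff, mem_compl, mem_singleton, mem_insert]; tauto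
      rw [ih, (h a).margOn_eq Fᶜ, hcap, hdiff, margOn_singleton, prod_insert ha]
      ring
  simpa [margOn_empty, hq] using peel univ

theorem margOn_eq_prod_of_eq_prod (μ : ∀ i, A i → ℝ) (hμ : ∀ i, ∑ b, μ i b = 1)
    (hq : ∀ g, q g = ∏ i, μ i (g i)) (S : Finset L) (x : ∀ i, A i) :
    margOn q S x = ∏ i ∈ S, μ i (x i) := by
  calc margOn q S x
      = ∑ g : ∀ i, A i, ∏ i, if i ∈ S → g i = x i then μ i (g i) else 0 := by
        simp only [margOn, prod_ite_zero, mem_univ, true_implies, hq]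
    _ = ∏ i, ∑ b, if i ∈ S → b = x i then μ i b else 0 :=
        (Fintype.prod_sum fun i b => if i ∈ S → b = x i then μ i b else 0).symm
    _ = ∏ i, if i ∈ S then μ i (x i) else 1 := by
        refine prod_congr rfl fun i _ => ?_
        split_ifs with hi <;> simp [hi, hμ]
    _ = ∏ i ∈ S, μ i (x i) := by simp [prod_ite_mem]

theorem factorsAcross_of_eq_prod (μ : ∀ i, A i → ℝ) (hμ : ∀ i, ∑ b, μ i b = 1)
    (hq : ∀ g, q g = ∏ i, μ i (g i)) (S : Finset L) : FactorsAcross q S := by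
  intro x
  rw [margOn_eq_prod_of_eq_prod μ hμ hq, margOn_eq_prod_of_eq_prod μ hμ hq,
    prod_mul_prod_compl, hq]

theorem sum_marg (q : (∀ i, A i) → ℝ) (i : L) : ∑ b, marg q i b = ∑ g : ∀ i, A i, q g := by
  simp only [marg]
  rw [sum_comm]
  simp

end ProductForm

open Real in
theorem eq_of_sum_negMulLog_le_of_mixture {ι G : Type*} [Fintype ι] [Fintype G]
    {w : ι → ℝ} (hw0 : ∀ k, 0 ≤ w k) (hw1 : ∑ k, w k = 1) {r : ι → G → ℝ}
    (hr0 : ∀ k x, 0 ≤ r k x)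
    {q : G → ℝ} (hq : ∀ x, q x = ∑ k, w k * r k x)
    (hH : ∀ k, ∑ x, negMulLog (q x) ≤ ∑ x, negMulLog (r k x)) {k : ι} (hk : w k ≠ 0) :
    r k = q := by
  have jensen (x : G) : ∑ k, w k * negMulLog (r k x) ≤ negMulLog (q x) := by
    simpa [hq] using concaveOn_negMulLog.le_map_sum (t := univ) (p := fun k => r k x)
      (fun k _ => hw0 k) hw1 fun k _ => Set.mem_Ici.2 (hr0 k x)
  have total : ∑ x, negMulLog (q x) ≤ ∑ x, ∑ k, w k * negMulLog (r k x) :=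
    calc ∑ x, negMulLog (q x) = ∑ k, w k * ∑ x, negMulLog (q x) := by
          rw [← sum_mul, hw1, one_mul]
      _ ≤ ∑ k, w k * ∑ x, negMulLog (r k x) :=
          sum_le_sum fun k _ => mul_le_mul_of_nonneg_left (hH k) (hw0 k)
      _ = ∑ x, ∑ k, w k * negMulLog (r k x) := by
          simp only [mul_sum]
          exact sum_comm
  have jensen_eq (x : G) : negMulLog (∑ k, w k • r k x) = ∑ k, w k • negMulLog (r k x) := by
    have := (sum_eq_sum_iff_of_le fun x _ => jensen x).1
      (le_antisymm (sum_le_sum fun x _ => jensen x) total) x (mem_univ x)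
    simpa [← hq] using this.symm
  funext x
  have := (strictConcaveOn_negMulLog.map_sum_eq_iff' (t := univ) (p := fun k => r k x)
    (fun k _ => hw0 k) hw1 fun k _ => Set.mem_Ici.2 (hr0 k x)).1 (jensen_eq x) k (mem_univ k) hk
  simpa [← hq] using this

open Real in
theorem sum_negMulLog_le_neg_sum_mul_log {G : Type*} [Fintype G] {q r : G → ℝ}
    (hq : ∀ x, 0 ≤ q x) (hr : ∀ x, 0 ≤ r x) (hsum : ∑ x, r x ≤ ∑ x, q x)
    (hsupp : ∀ x, 0 < q x → 0 < r x) :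
    ∑ x, negMulLog (q x) ≤ -∑ x, q x * log (r x) := by
  have pointwise (x : G) : negMulLog (q x) + q x * log (r x) ≤ r x - q x := by
    rcases (hq x).eq_or_lt with hqx | hqx
    · simpa [← hqx] using hr x
    have hrx := hsupp x hqx
    calc negMulLog (q x) + q x * log (r x) = q x * log (r x / q x) := by
          rw [negMulLog, log_div hrx.ne' hqx.ne']; ring
      _ ≤ q x * (r x / q x - 1) :=
          mul_le_mul_of_nonneg_left (log_le_sub_one_of_pos (div_pos hrx hqx)) hqx.le
      _ = r x - q x := by rw [mul_sub, mul_div_cancel₀ _ hqx.ne', mul_one]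
  have := sum_le_sum fun x (_ : x ∈ univ) => pointwise x
  rw [sum_add_distrib, sum_sub_distrib] at this
  linarith

section Entropy

variable {q : (∀ i, A i) → ℝ}

theorem sum_margOn_mul_margOn_compl_mul_of_dependsOn (hq : ∑ g : ∀ i, A i, q g = 1)
    {S : Finset L} {u : (∀ i, A i) → ℝ} (hu : ∀ g h, (∀ i ∈ S, g i = h i) → u g = u h) :
    ∑ x : ∀ i, A i, margOn q S x * margOn q Sᶜ x * u x = ∑ x : ∀ i, A i, q x * u x := by
  rw [sum_margOn_mul_margOn_compl_mul]
  refine sum_congr rfl fun g _ => ?_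
  have hrecomb (h : ∀ i, A i) : u (recomb S g h) = u g :=
    hu _ _ fun i hi => by simp [recomb, hi]
  rw [← mul_one (q g * u g), ← hq, mul_sum]
  exact sum_congr rfl fun h _ => by rw [hrecomb]; ring

open Real in
theorem sum_negMulLog_le_sum_negMulLog_margOn_mul (hq0 : ∀ x, 0 ≤ q x)
    (hq1 : ∑ g : ∀ i, A i, q g = 1) (S : Finset L) :
    ∑ x : ∀ i, A i, negMulLog (q x) ≤
      ∑ x : ∀ i, A i, negMulLog (margOn q S x * margOn q Sᶜ x) := by
  set m := margOn q S
  set m' := margOn q Sᶜ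
  have hm : ∑ x, m x * m' x * log (m x) = ∑ x, q x * log (m x) :=
    sum_margOn_mul_margOn_compl_mul_of_dependsOn hq1 fun g h hgh => by
      simp only [m, margOn_congr q hgh]
  have hm' : ∑ x, m x * m' x * log (m' x) = ∑ x, q x * log (m' x) := by
    rw [← sum_margOn_mul_margOn_compl_mul_of_dependsOn hq1 (S := Sᶜ) fun g h hgh => by
      simp only [m', margOn_congr q hgh]]
    simp only [compl_compl, m, m', mul_comm (margOn q S _)]
  have hlog_mul (x : ∀ i, A i) :
      q x * log (m x * m' x) = q x * log (m x) + q x * log (m' x) := by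
    rcases (hq0 x).eq_or_lt with hqx | hqx
    · simp [← hqx]
    rw [log_mul (hqx.trans_le (le_margOn hq0 S x)).ne' (hqx.trans_le (le_margOn hq0 Sᶜ x)).ne']
    ring
  have hentropy : ∑ x, negMulLog (m x * m' x) = -∑ x, q x * log (m x * m' x) := by
    simp only [hlog_mul, sum_add_distrib, ← hm, ← hm']
    rw [neg_add, ← sum_neg_distrib, ← sum_neg_distrib, ← sum_add_distrib]
    exact sum_congr rfl fun x _ => by rw [negMulLog_mul, negMulLog, negMulLog]; ring
  have hmass : ∑ x, m x * m' x ≤ ∑ x, q x := by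
    simpa using (sum_margOn_mul_margOn_compl_mul_of_dependsOn hq1 (S := S) (u := fun _ => 1)
      fun _ _ _ => rfl).le
  rw [hentropy]
  refine sum_negMulLog_le_neg_sum_mul_log hq0
    (fun x => mul_nonneg (margOn_nonneg hq0 S x) (margOn_nonneg hq0 Sᶜ x)) hmass fun x hx => ?_
  exact mul_pos (hx.trans_le (le_margOn hq0 S x)) (hx.trans_le (le_margOn hq0 Sᶜ x))

end Entropy

theorem recF_smul (c : Finset L → ℝ) (a : ℝ) (p : (∀ i, A i) → ℝ) :
    recF c (a • p) = a ^ 2 • recF c p := by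
  funext x
  simp only [recF, Pi.smul_apply, smul_eq_mul, mul_sum]
  exact sum_congr rfl fun g _ => sum_congr rfl fun h _ => sum_congr rfl fun I _ => by ring

theorem marg_smul (a : ℝ) (p : (∀ i, A i) → ℝ) (i : L) (b : A i) :
    marg (a • p) i b = a * marg p i b := by
  simp only [marg, Pi.smul_apply, smul_eq_mul, mul_sum, mul_ite, mul_zero]

section Equilibrium

variable {c : Finset L → ℝ} {q : (∀ i, A i) → ℝ}

theorem factorsAcross_of_recF_eq_zero (hc : ∀ I, 0 ≤ c I) (hq0 : ∀ x, 0 ≤ q x)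
    (hq1 : ∑ g : ∀ i, A i, q g = 1) (hF : recF c q = 0) {I : Finset L} (hI : 0 < c I) :
    FactorsAcross q I := by
  set C := ∑ J, c J
  have hC : 0 < C := hI.trans_le (single_le_sum (fun J _ => hc J) (mem_univ I))
  have hmix (x : ∀ i, A i) :
      q x = ∑ J, c J / C * (margOn q J x * margOn q Jᶜ x) := by
    have hx : ∑ J, c J * (margOn q J x * margOn q Jᶜ x) = C * q x := by
      have h := congrFun hF x
      rw [recF_apply, hq1, one_mul, Pi.zero_apply] at h
      simp only [mul_sub, sum_sub_distrib, ← sum_mul] at h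
      linarith
    simp only [div_mul_eq_mul_div, ← sum_div, hx, mul_div_cancel_left₀ _ hC.ne']
  have hH := eq_of_sum_negMulLog_le_of_mixture (w := fun J => c J / C)
    (r := fun J x => margOn q J x * margOn q Jᶜ x) (fun J => div_nonneg (hc J) hC.le)
    (by rw [← sum_div, div_self hC.ne'])
    (fun J x => mul_nonneg (margOn_nonneg hq0 J x) (margOn_nonneg hq0 Jᶜ x)) hmix
    (sum_negMulLog_le_sum_negMulLog_margOn_mul hq0 hq1) (div_pos hI hC).ne'
  exact congrFun hH

theorem recF_eq_zero_iff_eq_prod_marg (hc : ∀ I, 0 ≤ c I)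
    (hsep : ∀ i j : L, i ≠ j → ∃ I, i ∈ I ∧ j ∉ I ∧ 0 < c I) (hq0 : ∀ x, 0 ≤ q x)
    (hq1 : ∑ g : ∀ i, A i, q g = 1) :
    recF c q = 0 ↔ ∀ g, q g = ∏ i, marg q i (g i) := by
  constructor
  · intro hF
    refine eq_prod_marg_of_factorsAcross_singleton hq1 fun i =>
      factorsAcross_singleton hq1 i fun j hji => ?_
    obtain ⟨I, hiI, hjI, hI⟩ := hsep i j hji.symm
    exact ⟨I, factorsAcross_of_recF_eq_zero hc hq0 hq1 hF hI, hiI, hjI⟩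
  · intro hprod
    have hS := factorsAcross_of_eq_prod (fun i => marg q i)
      (fun i => (sum_marg q i).trans hq1) hprod
    funext x
    simp [recF_apply, hS _ x, hq1]

end Equilibrium

end

theorem equilibrium_iff_scaled_product_of_marginals_general
    {L : Type} [Fintype L] [DecidableEq L]
    (A : L → Type) [∀ i, Fintype (A i)] [∀ i, DecidableEq (A i)]
    (c : Finset L → ℝ) (hc : ∀ I, 0 ≤ c I)
    (hsep : ∀ i j : L, i ≠ j →
      0 < ∑ I ∈ univ.filter (fun I : Finset L => i ∈ I ∧ j ∉ I), c I)
    (p : (∀ i, A i) → ℝ) (hp0 : ∀ g, 0 ≤ p g)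
    (σ : ℝ) (hσ : σ = ∑ g : ∀ i, A i, p g) (hσpos : 0 < σ) :
    recF c p = 0 ↔
      ∀ g : ∀ i, A i, p g = σ ^ (1 - (Fintype.card L : ℤ)) * ∏ i : L, marg p i (g i) := by
  have hsep' (i j : L) (hij : i ≠ j) : ∃ I, i ∈ I ∧ j ∉ I ∧ 0 < c I := by
    by_contra! hle
    exact (hsep i j hij).not_ge <| sum_nonpos fun I hI =>
      hle I (mem_filter.1 hI).2.1 (mem_filter.1 hI).2.2
  have hq0 (g : ∀ i, A i) : 0 ≤ (σ⁻¹ • p) g := mul_nonneg (inv_nonneg.2 hσpos.le) (hp0 g)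
  have hq1 : ∑ g : ∀ i, A i, (σ⁻¹ • p) g = 1 := by
    simp [← mul_sum, ← hσ, hσpos.ne']
  have hrecF : recF c p = 0 ↔ recF c (σ⁻¹ • p) = 0 := by
    simp [recF_smul, hσpos.ne']
  rw [hrecF, recF_eq_zero_iff_eq_prod_marg hc hsep' hq0 hq1]
  refine forall_congr' fun g => ?_
  simp only [Pi.smul_apply, smul_eq_mul, marg_smul, prod_mul_distrib, prod_const, card_univ]
  rw [zpow_sub₀ hσpos.ne', zpow_one, zpow_natCast, div_eq_mul_inv, ← inv_pow, mul_assoc,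
    inv_mul_eq_iff_eq_mul₀ hσpos.ne']

/-- **Equilibria of the recombination dynamics off the simplex.**
Under the standing assumption, a nonnegative point `p` with positive total mass
`σ = Σ_g p(g) > 0` is an equilibrium of the recombination dynamics, `F(p) = 0`, if and
only if `p(g) = σ^{1−L} ∏ᵢ pᵢ(gᵢ)` for all gametes `g`. -/
theorem equilibrium_iff_scaled_product_of_marginals
    {L : Type} [Fintype L] [DecidableEq L] [Nonempty L]
    (A : L → Type) [∀ i, Fintype (A i)] [∀ i, DecidableEq (A i)]
    (hA : ∀ i, 2 ≤ Fintype.card (A i))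
    (c : Finset L → ℝ) (hc : ∀ I, 0 ≤ c I) (hcsym : ∀ I, c I = c Iᶜ)
    (hsep : ∀ i j : L, i ≠ j →
      0 < ∑ I ∈ univ.filter (fun I : Finset L => i ∈ I ∧ j ∉ I), c I)
    (p : (∀ i, A i) → ℝ) (hp0 : ∀ g, 0 ≤ p g)
    (σ : ℝ) (hσ : σ = ∑ g : ∀ i, A i, p g) (hσpos : 0 < σ) :
    recF c p = 0 ↔
      ∀ g : ∀ i, A i, p g = σ ^ (1 - (Fintype.card L : ℤ)) * ∏ i : L, marg p i (g i) :=
  equilibrium_iff_scaled_product_of_marginals_general A c hc hsep p hp0 σ hσ hσpos
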